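/- arXiv:1002.0174 — 2 statements merged into one kernel-verified Lean document; each statement's English description precedes it below -/
import Mathlib

section
/- Let f : ℝⁿ → ℝ be an irreducible polynomial such that every regular point of f on f⁻¹(0) has mean curvature equal to a constant H, and suppose f⁻¹(0) contains a regular point. Then there exists a polynomial p : ℝⁿ → ℝ such that (2|∇f|²Δf − ⟨∇|∇f|², ∇f⟩)² − 4(n−1)²H²|∇f|⁶ = p·f as polynomials. -/
/-!
Squaring the constant mean curvature equation removes the square root `|∇f|³`, and at the
singular zeros of `f` both terms of the squared identity vanish, so the polynomial `g` on the
left-hand side vanishes on all of `f⁻¹(0)`; it remains to show `f ∣ g`.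

After renaming variables, `∂₀f(x₀) ≠ 0` at a regular zero `x₀ = (t₀, s₀)`. View `f` and `g` as
polynomials in the first variable over `R = ℝ[x₁, …]`. If `f ∤ g`, Gauss's lemma makes them
coprime over `Frac R`, so their resultant `d ∈ R` is nonzero and of the form `a f + b g`. Hence
`d(s) = 0` whenever `t ↦ f(t, s)` has a real root. As `f(·, s₀)` changes sign at its simple zero
`t₀`, the intermediate value theorem gives such a root for every `s` near `s₀`, so `d` vanishes on
an open set and `d = 0`, a contradiction.
-/

open MvPolynomial

/-- `|∇f|²` as a polynomial: the sum of the squares of the partial derivatives. -/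
noncomputable def gradNormSq (n : ℕ) (f : MvPolynomial (Fin n) ℝ) : MvPolynomial (Fin n) ℝ :=
  ∑ i, (pderiv i f) ^ 2

/-- `Δf` as a polynomial: the sum of the second partial derivatives. -/
noncomputable def lapPoly (n : ℕ) (f : MvPolynomial (Fin n) ℝ) : MvPolynomial (Fin n) ℝ :=
  ∑ i, pderiv i (pderiv i f)

/-- `⟨∇|∇f|², ∇f⟩` as a polynomial. -/
noncomputable def innerPoly (n : ℕ) (f : MvPolynomial (Fin n) ℝ) : MvPolynomial (Fin n) ℝ :=
  ∑ i, pderiv i (gradNormSq n f) * pderiv i f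

open Filter Topology

theorem exists_lt_and_gt_of_hasDerivAt {φ : ℝ → ℝ} {c t : ℝ} (hφ : HasDerivAt φ c t)
    (hc : c ≠ 0) : (∃ a, φ a < φ t) ∧ ∃ b, φ t < φ b := by
  have hmin : ¬IsLocalMin φ t := fun h => hc (h.hasDerivAt_eq_zero hφ)
  have hmax : ¬IsLocalMax φ t := fun h => hc (h.hasDerivAt_eq_zero hφ)
  rw [IsLocalMin, IsMinFilter, not_eventually] at hmin
  rw [IsLocalMax, IsMaxFilter, not_eventually] at hmax
  simp only [not_le] at hmin hmax
  exact ⟨hmin.exists, hmax.exists⟩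

theorem Polynomial.exists_mul_add_mul_eq_C_of_not_dvd {R : Type*} [CommRing R] [IsDomain R]
    [IsGCDMonoid R] {f g : Polynomial R} (hf : Irreducible f) (hdeg : f.natDegree ≠ 0)
    (hfg : ¬f ∣ g) : ∃ d ≠ 0, ∃ a b : Polynomial R, f * a + g * b = C d := by
  have hinj := IsFractionRing.injective R (FractionRing R)
  have hprim := hf.isPrimitive hdeg
  have hcop : IsCoprime (f.map (algebraMap R (FractionRing R)))
      (g.map (algebraMap R (FractionRing R))) :=
    (hprim.irreducible_iff_irreducible_map_fraction_map.mp hf).coprime_iff_not_dvd.mpr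
      (by rwa [← hprim.dvd_iff_fraction_map_dvd_fraction_map (FractionRing R)])
  refine ⟨f.resultant g, fun h => resultant_ne_zero _ _ hcop ?_, ?_⟩
  · rw [natDegree_map_eq_of_injective hinj, natDegree_map_eq_of_injective hinj,
      resultant_map_map, h, map_zero]
  · obtain ⟨a, b, -, -, h⟩ := exists_mul_add_mul_eq_C_resultant f g le_rfl le_rfl (.inl hdeg)
    exact ⟨a, b, h⟩

namespace MvPolynomial

theorem eq_zero_of_eventually_eval_eq_zero {𝕜 σ : Type*} [NontriviallyNormedField 𝕜]
    [Fintype σ] {p : MvPolynomial σ 𝕜} {a : σ → 𝕜} (h : ∀ᶠ x in 𝓝 a, eval x p = 0) : p = 0 := by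
  obtain ⟨ε, hε, hball⟩ := Metric.eventually_nhds_iff_ball.mp h
  refine funext_set (fun i => Metric.ball (a i) ε)
    (fun i => infinite_of_mem_nhds _ (Metric.ball_mem_nhds _ hε)) fun x hx => ?_
  rw [map_zero]
  exact hball x (by rwa [ball_pi _ hε])

theorem finSuccEquiv_pderiv_zero {R : Type*} [CommSemiring R] {m : ℕ}
    (p : MvPolynomial (Fin (m + 1)) R) :
    finSuccEquiv R m (pderiv 0 p) = Polynomial.derivative (finSuccEquiv R m p) := by
  induction p using MvPolynomial.induction_on with
  | C a => simp [finSuccEquiv_apply]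
  | add p q hp hq => simp [hp, hq]
  | mul_X p i hp =>
    cases i using Fin.cases with
    | zero => simp [hp, finSuccEquiv_X_zero, Polynomial.derivative_mul, mul_comm]
    | succ j => simp [pderiv_X_of_ne (Fin.succ_ne_zero j), hp, finSuccEquiv_X_succ,
        Polynomial.derivative_mul, mul_comm]

theorem eventually_exists_eval_cons_eq_zero {m : ℕ} {f : MvPolynomial (Fin (m + 1)) ℝ}
    {t₀ : ℝ} {s₀ : Fin m → ℝ} (h₀ : eval (Fin.cons t₀ s₀) f = 0)
    (hd : eval (Fin.cons t₀ s₀) (pderiv 0 f) ≠ 0) :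
    ∀ᶠ s in 𝓝 s₀, ∃ t, eval (Fin.cons t s) f = 0 := by
  have hcont : Continuous fun ts : ℝ × (Fin m → ℝ) => eval (Fin.cons ts.1 ts.2) f :=
    (continuous_eval f).comp (continuous_fst.finCons (A := fun _ => ℝ) continuous_snd)
  have hderiv : HasDerivAt (fun t => eval (Fin.cons t s₀) f)
      (eval (Fin.cons t₀ s₀) (pderiv 0 f)) t₀ := by
    simp only [eval_eq_eval_mv_eval', finSuccEquiv_pderiv_zero, ← Polynomial.derivative_map]
    exact Polynomial.hasDerivAt _ _
  obtain ⟨⟨a, ha⟩, ⟨b, hb⟩⟩ := exists_lt_and_gt_of_hasDerivAt hderiv hd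
  rw [h₀] at ha hb
  have hna : ∀ᶠ s in 𝓝 s₀, eval (Fin.cons a s) f < 0 :=
    (hcont.comp (Continuous.prodMk_right a)).continuousAt.eventually_lt continuousAt_const ha
  have hpb : ∀ᶠ s in 𝓝 s₀, 0 < eval (Fin.cons b s) f :=
    continuousAt_const.eventually_lt (hcont.comp (Continuous.prodMk_right b)).continuousAt hb
  filter_upwards [hna, hpb] with s hs₁ hs₂
  exact intermediate_value_univ a b (hcont.comp (Continuous.prodMk_left s)) ⟨hs₁.le, hs₂.le⟩

theorem dvd_of_eval_eq_zero_of_eval_pderiv_zero_ne_zero {m : ℕ}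
    {f g : MvPolynomial (Fin (m + 1)) ℝ} (hf : Irreducible f) {x₀ : Fin (m + 1) → ℝ}
    (h₀ : eval x₀ f = 0) (hd : eval x₀ (pderiv 0 f) ≠ 0)
    (hg : ∀ x, eval x f = 0 → eval x g = 0) : f ∣ g := by
  by_contra hfg
  have hdeg : (finSuccEquiv ℝ m f).natDegree ≠ 0 := by
    intro h
    have hpd : pderiv 0 f = 0 := (finSuccEquiv ℝ m).injective <| by
      rw [finSuccEquiv_pderiv_zero, Polynomial.derivative_of_natDegree_zero h, map_zero]
    exact hd (by rw [hpd, map_zero])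
  obtain ⟨d, hd0, a, b, hab⟩ := Polynomial.exists_mul_add_mul_eq_C_of_not_dvd
    ((MulEquiv.irreducible_iff (finSuccEquiv ℝ m)).mpr hf) hdeg (by rwa [map_dvd_iff])
  have hvan : ∀ s t, eval (Fin.cons t s) f = 0 → eval s d = 0 := by
    intro s t ht
    have := congrArg (fun P => (P.map (eval s)).eval t) hab
    simpa [← eval_eq_eval_mv_eval', ht, hg _ ht] using this.symm
  rw [← Fin.cons_self_tail x₀] at h₀ hd
  exact hd0 (eq_zero_of_eventually_eval_eq_zero <|
    (eventually_exists_eval_cons_eq_zero h₀ hd).mono fun s ⟨t, ht⟩ => hvan s t ht)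

theorem dvd_of_eval_eq_zero_of_eval_pderiv_ne_zero {n : ℕ} {f g : MvPolynomial (Fin n) ℝ}
    (hf : Irreducible f) {x₀ : Fin n → ℝ} (i : Fin n) (h₀ : eval x₀ f = 0)
    (hd : eval x₀ (pderiv i f) ≠ 0) (hg : ∀ x, eval x f = 0 → eval x g = 0) : f ∣ g := by
  cases n with
  | zero => exact i.elim0
  | succ m =>
    set σ := Equiv.swap 0 i
    rw [← map_dvd_iff (renameEquiv ℝ σ)]
    refine dvd_of_eval_eq_zero_of_eval_pderiv_zero_ne_zero (x₀ := x₀ ∘ σ.symm)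
      ((MulEquiv.irreducible_iff (renameEquiv ℝ σ)).mpr hf) ?_ ?_ fun x hx => ?_
    · simpa [eval_rename, Function.comp_assoc] using h₀
    · rw [show (0 : Fin (m + 1)) = σ i from (Equiv.swap_apply_right 0 i).symm]
      simpa [pderiv_rename σ.injective, eval_rename, Function.comp_assoc] using hd
    · simp only [renameEquiv_apply, eval_rename] at hx ⊢
      exact hg _ hx

section Gradient

variable {n : ℕ} {f : MvPolynomial (Fin n) ℝ} {x : Fin n → ℝ}

theorem eval_gradNormSq_nonneg : 0 ≤ eval x (gradNormSq n f) := by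
  simp only [gradNormSq, map_sum, map_pow]
  exact Finset.sum_nonneg fun i _ => sq_nonneg _

theorem eval_gradNormSq_eq_zero_iff :
    eval x (gradNormSq n f) = 0 ↔ ∀ i, eval x (pderiv i f) = 0 := by
  simp [gradNormSq, Finset.sum_eq_zero_iff_of_nonneg, sq_nonneg]

theorem eval_innerPoly_eq_zero_of_eval_gradNormSq_eq_zero (h : eval x (gradNormSq n f) = 0) :
    eval x (innerPoly n f) = 0 := by
  simp [innerPoly, eval_gradNormSq_eq_zero_iff.mp h]

end Gradient

end MvPolynomial

theorem cmc_polynomial_identity_general (n : ℕ) (f : MvPolynomial (Fin n) ℝ)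
    (hirr : Irreducible f) (H : ℝ)
    (hreg : ∃ x : Fin n → ℝ, eval x f = 0 ∧ eval x (gradNormSq n f) ≠ 0)
    (hcmc : ∀ x : Fin n → ℝ, eval x f = 0 → eval x (gradNormSq n f) ≠ 0 →
      eval x (2 * gradNormSq n f * lapPoly n f - innerPoly n f) =
        2 * ((n : ℝ) - 1) * H * Real.sqrt (eval x (gradNormSq n f)) ^ 3) :
    ∃ p : MvPolynomial (Fin n) ℝ,
      (2 * gradNormSq n f * lapPoly n f - innerPoly n f) ^ 2 -
          C (4 * ((n : ℝ) - 1) ^ 2 * H ^ 2) * (gradNormSq n f) ^ 3 = p * f := by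
  obtain ⟨x₀, hx₀, hreg₀⟩ := hreg
  obtain ⟨i, hi⟩ := not_forall.mp (mt eval_gradNormSq_eq_zero_iff.mpr hreg₀)
  refine dvd_iff_exists_eq_mul_left.mp
    (dvd_of_eval_eq_zero_of_eval_pderiv_ne_zero hirr i hx₀ hi fun x hx => ?_)
  rw [map_sub, map_pow, map_mul, map_pow, eval_C]
  by_cases hS : eval x (gradNormSq n f) = 0
  · simp [hS, eval_innerPoly_eq_zero_of_eval_gradNormSq_eq_zero hS]
  · have hsqrt := Real.sq_sqrt (eval_gradNormSq_nonneg (x := x) (f := f))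
    rw [hcmc x hx hS]
    set s := Real.sqrt (eval x (gradNormSq n f))
    linear_combination (4 * ((n : ℝ) - 1) ^ 2 * H ^ 2 *
      (s ^ 4 + s ^ 2 * eval x (gradNormSq n f) + eval x (gradNormSq n f) ^ 2)) * hsqrt

/-- if `f` is an irreducible real polynomial in `n` variables whose zero
set contains a regular point and whose regular level set has constant mean curvature
`H` (i.e. `2|∇f|²Δf − ⟨∇|∇f|²,∇f⟩ = 2(n−1)H|∇f|³` at every regular zero of `f`),
then there is a polynomial `p` with
`(2|∇f|²Δf − ⟨∇|∇f|²,∇f⟩)² − 4(n−1)²H²|∇f|⁶ = p·f` as polynomials. -/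
theorem cmc_polynomial_identity (n : ℕ) (hn : 2 ≤ n) (f : MvPolynomial (Fin n) ℝ)
    (hirr : Irreducible f) (H : ℝ)
    (hreg : ∃ x : Fin n → ℝ, eval x f = 0 ∧ eval x (gradNormSq n f) ≠ 0)
    (hcmc : ∀ x : Fin n → ℝ, eval x f = 0 → eval x (gradNormSq n f) ≠ 0 →
      eval x (2 * gradNormSq n f * lapPoly n f - innerPoly n f) =
        2 * ((n : ℝ) - 1) * H * Real.sqrt (eval x (gradNormSq n f)) ^ 3) :
    ∃ p : MvPolynomial (Fin n) ℝ,
      (2 * gradNormSq n f * lapPoly n f - innerPoly n f) ^ 2 -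
          C (4 * ((n : ℝ) - 1) ^ 2 * H ^ 2) * (gradNormSq n f) ^ 3 = p * f :=
  cmc_polynomial_identity_general n f hirr H hreg hcmc
end

section
/- Let f : ℝ³ → ℝ be a cubic polynomial with f(0) = 0, and suppose that along a smooth arc-length parametrized curve α in f⁻¹(0) with α(0) = 0 and α′(0) = (1,0,0), all three partial derivatives of f vanish identically. Then the coefficients of f satisfy: the coefficient b₁ of x₁² is 0, the coefficient b₄ of x₁x₂ is 0, the coefficient b₅ of x₁x₃ is 0, and the coefficient a₁ of x₁³ is 0. -/
open MvPolynomial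

lemma aux1 (x y z : ℝ → ℝ) (c1 c2 c3 c4 c5 c6 d1 d2 d3 : ℝ)
    (hx : HasDerivAt x 1 0) (hy : HasDerivAt y 0 0) (hz : HasDerivAt z 0 0)
    (hx0 : x 0 = 0) (hy0 : y 0 = 0) (hz0 : z 0 = 0)
    (H : ∀ t, c1 * (x t * x t) + c2 * (x t * y t) + c3 * (x t * z t) +
      c4 * (y t * y t) + c5 * (z t * z t) + c6 * (y t * z t) +
      d1 * x t + d2 * y t + d3 * z t = 0) : d1 = 0 := by
  have E : HasDerivAt (fun t => c1 * (x t * x t) + c2 * (x t * y t) + c3 * (x t * z t) +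
      c4 * (y t * y t) + c5 * (z t * z t) + c6 * (y t * z t) +
      d1 * x t + d2 * y t + d3 * z t)
      (c1 * (1 * x 0 + x 0 * 1) + c2 * (1 * y 0 + x 0 * 0) + c3 * (1 * z 0 + x 0 * 0) +
       c4 * (0 * y 0 + y 0 * 0) + c5 * (0 * z 0 + z 0 * 0) + c6 * (0 * z 0 + y 0 * 0) +
       d1 * 1 + d2 * 0 + d3 * 0) 0 :=
    (((((((((hx.mul hx).const_mul c1).add ((hx.mul hy).const_mul c2)).add
      ((hx.mul hz).const_mul c3)).add ((hy.mul hy).const_mul c4)).add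
      ((hz.mul hz).const_mul c5)).add ((hy.mul hz).const_mul c6)).add
      (hx.const_mul d1)).add (hy.const_mul d2)).add (hz.const_mul d3)
  have hfun : (fun t => c1 * (x t * x t) + c2 * (x t * y t) + c3 * (x t * z t) +
      c4 * (y t * y t) + c5 * (z t * z t) + c6 * (y t * z t) +
      d1 * x t + d2 * y t + d3 * z t) = fun _ => (0:ℝ) := funext H
  rw [hfun] at E
  have := E.unique (hasDerivAt_const 0 0)
  rw [hx0, hy0, hz0] at this
  linarith [this]

lemma aux2 (x y z : ℝ → ℝ) (c1 c2 c3 c4 c5 c6 : ℝ)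
    (hx : ContDiff ℝ (⊤ : ℕ∞) x) (hy : ContDiff ℝ (⊤ : ℕ∞) y) (hz : ContDiff ℝ (⊤ : ℕ∞) z)
    (hx0 : x 0 = 0) (hy0 : y 0 = 0) (hz0 : z 0 = 0)
    (hx' : deriv x 0 = 1) (hy' : deriv y 0 = 0) (hz' : deriv z 0 = 0)
    (H : ∀ t, c1 * (x t * x t) + c2 * (x t * y t) + c3 * (x t * z t) +
      c4 * (y t * y t) + c5 * (z t * z t) + c6 * (y t * z t) = 0) : c1 = 0 := by
  obtain ⟨hdx, hx1⟩ := contDiff_infty_iff_deriv.mp (hx.of_le (by simp))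
  obtain ⟨hdy, hy1⟩ := contDiff_infty_iff_deriv.mp (hy.of_le (by simp))
  obtain ⟨hdz, hz1⟩ := contDiff_infty_iff_deriv.mp (hz.of_le (by simp))
  have E : ∀ t, HasDerivAt (fun t => c1 * (x t * x t) + c2 * (x t * y t) +
      c3 * (x t * z t) + c4 * (y t * y t) + c5 * (z t * z t) + c6 * (y t * z t))
      (c1 * (deriv x t * x t + x t * deriv x t) + c2 * (deriv x t * y t + x t * deriv y t) +
       c3 * (deriv x t * z t + x t * deriv z t) + c4 * (deriv y t * y t + y t * deriv y t) +
       c5 * (deriv z t * z t + z t * deriv z t) + c6 * (deriv y t * z t + y t * deriv z t)) t :=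
    fun t =>
      (((((((hdx t).hasDerivAt.mul (hdx t).hasDerivAt).const_mul c1).add
        (((hdx t).hasDerivAt.mul (hdy t).hasDerivAt).const_mul c2)).add
        (((hdx t).hasDerivAt.mul (hdz t).hasDerivAt).const_mul c3)).add
        (((hdy t).hasDerivAt.mul (hdy t).hasDerivAt).const_mul c4)).add
        (((hdz t).hasDerivAt.mul (hdz t).hasDerivAt).const_mul c5)).add
        (((hdy t).hasDerivAt.mul (hdz t).hasDerivAt).const_mul c6)
  have hfun : (fun t => c1 * (x t * x t) + c2 * (x t * y t) + c3 * (x t * z t) +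
      c4 * (y t * y t) + c5 * (z t * z t) + c6 * (y t * z t)) = fun _ => (0:ℝ) := funext H
  have D : ∀ t, c1 * (deriv x t * x t + x t * deriv x t) +
      c2 * (deriv x t * y t + x t * deriv y t) +
      c3 * (deriv x t * z t + x t * deriv z t) +
      c4 * (deriv y t * y t + y t * deriv y t) +
      c5 * (deriv z t * z t + z t * deriv z t) +
      c6 * (deriv y t * z t + y t * deriv z t) = 0 := by
    intro t
    have Et := E t
    rw [hfun] at Et
    exact Et.unique (hasDerivAt_const t 0)
  -- second derivative at 0
  have hdx' := (hx1.differentiable (by simp) 0).hasDerivAt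
  have hdy' := (hy1.differentiable (by simp) 0).hasDerivAt
  have hdz' := (hz1.differentiable (by simp) 0).hasDerivAt
  have hdx0 := (hdx 0).hasDerivAt
  have hdy0 := (hdy 0).hasDerivAt
  have hdz0 := (hdz 0).hasDerivAt
  have E2 : HasDerivAt (fun t => c1 * (deriv x t * x t + x t * deriv x t) +
      c2 * (deriv x t * y t + x t * deriv y t) +
      c3 * (deriv x t * z t + x t * deriv z t) +
      c4 * (deriv y t * y t + y t * deriv y t) +
      c5 * (deriv z t * z t + z t * deriv z t) +
      c6 * (deriv y t * z t + y t * deriv z t))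
      (c1 * ((deriv (deriv x) 0 * x 0 + deriv x 0 * deriv x 0) +
             (deriv x 0 * deriv x 0 + x 0 * deriv (deriv x) 0)) +
       c2 * ((deriv (deriv x) 0 * y 0 + deriv x 0 * deriv y 0) +
             (deriv x 0 * deriv y 0 + x 0 * deriv (deriv y) 0)) +
       c3 * ((deriv (deriv x) 0 * z 0 + deriv x 0 * deriv z 0) +
             (deriv x 0 * deriv z 0 + x 0 * deriv (deriv z) 0)) +
       c4 * ((deriv (deriv y) 0 * y 0 + deriv y 0 * deriv y 0) +
             (deriv y 0 * deriv y 0 + y 0 * deriv (deriv y) 0)) +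
       c5 * ((deriv (deriv z) 0 * z 0 + deriv z 0 * deriv z 0) +
             (deriv z 0 * deriv z 0 + z 0 * deriv (deriv z) 0)) +
       c6 * ((deriv (deriv y) 0 * z 0 + deriv y 0 * deriv z 0) +
             (deriv y 0 * deriv z 0 + y 0 * deriv (deriv z) 0))) 0 :=
    (((((((hdx'.mul hdx0).add (hdx0.mul hdx')).const_mul c1).add
      (((hdx'.mul hdy0).add (hdx0.mul hdy')).const_mul c2)).add
      (((hdx'.mul hdz0).add (hdx0.mul hdz')).const_mul c3)).add
      (((hdy'.mul hdy0).add (hdy0.mul hdy')).const_mul c4)).add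
      (((hdz'.mul hdz0).add (hdz0.mul hdz')).const_mul c5)).add
      (((hdy'.mul hdz0).add (hdy0.mul hdz')).const_mul c6)
  have hfun2 : (fun t => c1 * (deriv x t * x t + x t * deriv x t) +
      c2 * (deriv x t * y t + x t * deriv y t) +
      c3 * (deriv x t * z t + x t * deriv z t) +
      c4 * (deriv y t * y t + y t * deriv y t) +
      c5 * (deriv z t * z t + z t * deriv z t) +
      c6 * (deriv y t * z t + y t * deriv z t)) = fun _ => (0:ℝ) := funext D
  rw [hfun2] at E2
  have key := E2.unique (hasDerivAt_const 0 0)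
  rw [hx0, hy0, hz0, hx', hy', hz'] at key
  ring_nf at key
  linarith [key]


/-- let `f` be a cubic in `ℝ[x₁,x₂,x₃]` with no constant or linear
terms, written with cubic coefficients `a₁,…,a₁₀` and quadratic coefficients
`b₁,…,b₆`, and suppose all three partial derivatives of `f` vanish along a smooth
arc-length parametrized curve `α` in `f⁻¹(0)` with `α(0) = 0` and `α′(0) = (1,0,0)`.
Then `b₁ = b₄ = b₅ = 0` and `a₁ = 0` (the coefficients of `x₁²`, `x₁x₂`, `x₁x₃` and
`x₁³`). Here `X 0, X 1, X 2` stand for `x₁, x₂, x₃`. -/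
theorem caseII_coefficient_vanishing
    (a₁ a₂ a₃ a₄ a₅ a₆ a₇ a₈ a₉ a₁₀ b₁ b₂ b₃ b₄ b₅ b₆ : ℝ)
    (f : MvPolynomial (Fin 3) ℝ)
    (hf : f = C a₁ * X 0 ^ 3 + C a₂ * X 1 ^ 3 + C a₃ * X 2 ^ 3 +
        C a₄ * X 0 ^ 2 * X 1 + C a₅ * X 0 ^ 2 * X 2 + C a₆ * X 1 ^ 2 * X 0 +
        C a₇ * X 1 ^ 2 * X 2 + C a₈ * X 2 ^ 2 * X 0 + C a₉ * X 2 ^ 2 * X 1 +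
        C a₁₀ * X 0 * X 1 * X 2 + C b₁ * X 0 ^ 2 + C b₂ * X 1 ^ 2 +
        C b₃ * X 2 ^ 2 + C b₄ * X 0 * X 1 + C b₅ * X 0 * X 2 + C b₆ * X 1 * X 2)
    (α : ℝ → EuclideanSpace ℝ (Fin 3)) (hα : ContDiff ℝ (⊤ : ℕ∞) α)
    (harc : ∀ t, ‖deriv α t‖ = 1)
    (h0 : α 0 = 0) (hv : deriv α 0 = EuclideanSpace.single 0 1)
    (hzero : ∀ t, eval (fun j => α t j) f = 0)
    (hcrit : ∀ (i : Fin 3) (t : ℝ), eval (fun j => α t j) (pderiv i f) = 0) :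
    b₁ = 0 ∧ b₄ = 0 ∧ b₅ = 0 ∧ a₁ = 0 := by
  have hαd : Differentiable ℝ α := hα.differentiable (by simp)
  have hda : HasDerivAt α (EuclideanSpace.single 0 1) 0 := hv ▸ (hαd 0).hasDerivAt
  have hd : ∀ i : Fin 3, HasDerivAt (fun t => α t i)
      ((EuclideanSpace.single (0 : Fin 3) (1:ℝ)) i) 0 := by
    intro i
    have h := ((EuclideanSpace.proj (𝕜 := ℝ) i).hasFDerivAt
      (x := α 0)).comp_hasDerivAt 0 hda
    simp only [Function.comp_def] at h; simpa using h
  have hdx : HasDerivAt (fun t => α t 0) 1 0 := by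
    have := hd 0; simpa [EuclideanSpace.single_apply] using this
  have hdy : HasDerivAt (fun t => α t 1) 0 0 := by
    have := hd 1; simpa [EuclideanSpace.single_apply] using this
  have hdz : HasDerivAt (fun t => α t 2) 0 0 := by
    have := hd 2; simpa [EuclideanSpace.single_apply] using this
  have hcc : ∀ i : Fin 3, ContDiff ℝ (⊤ : ℕ∞) (fun t => α t i) := fun i =>
    (EuclideanSpace.proj (𝕜 := ℝ) i).contDiff.comp hα
  have hx0 : α 0 0 = 0 := by rw [h0]; rfl
  have hy0 : α 0 1 = 0 := by rw [h0]; rfl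
  have hz0 : α 0 2 = 0 := by rw [h0]; rfl
  have H0 : ∀ t, (3*a₁) * (α t 0 * α t 0) + (2*a₄) * (α t 0 * α t 1) +
      (2*a₅) * (α t 0 * α t 2) + a₆ * (α t 1 * α t 1) + a₈ * (α t 2 * α t 2) +
      a₁₀ * (α t 1 * α t 2) + (2*b₁) * α t 0 + b₄ * α t 1 + b₅ * α t 2 = 0 := by
    intro t
    have h := hcrit 0 t
    rw [hf] at h
    simp [pderiv_mul, pderiv_pow, pderiv_X, Pi.single_apply] at h
    linear_combination h
  have H1 : ∀ t, a₄ * (α t 0 * α t 0) + (2*a₆) * (α t 0 * α t 1) +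
      a₁₀ * (α t 0 * α t 2) + (3*a₂) * (α t 1 * α t 1) + a₉ * (α t 2 * α t 2) +
      (2*a₇) * (α t 1 * α t 2) + b₄ * α t 0 + (2*b₂) * α t 1 + b₆ * α t 2 = 0 := by
    intro t
    have h := hcrit 1 t
    rw [hf] at h
    simp [pderiv_mul, pderiv_pow, pderiv_X, Pi.single_apply] at h
    linear_combination h
  have H2 : ∀ t, a₅ * (α t 0 * α t 0) + a₁₀ * (α t 0 * α t 1) +
      (2*a₈) * (α t 0 * α t 2) + a₇ * (α t 1 * α t 1) + (3*a₃) * (α t 2 * α t 2) +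
      (2*a₉) * (α t 1 * α t 2) + b₅ * α t 0 + b₆ * α t 1 + (2*b₃) * α t 2 = 0 := by
    intro t
    have h := hcrit 2 t
    rw [hf] at h
    simp [pderiv_mul, pderiv_pow, pderiv_X, Pi.single_apply] at h
    linear_combination h
  have hb1 : (2*b₁ : ℝ) = 0 := aux1 _ _ _ _ _ _ _ _ _ _ _ _ hdx hdy hdz hx0 hy0 hz0 H0
  have hb4 : (b₄ : ℝ) = 0 := aux1 _ _ _ _ _ _ _ _ _ _ _ _ hdx hdy hdz hx0 hy0 hz0 H1
  have hb5 : (b₅ : ℝ) = 0 := aux1 _ _ _ _ _ _ _ _ _ _ _ _ hdx hdy hdz hx0 hy0 hz0 H2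
  have hb1' : b₁ = 0 := by linarith
  have H0' : ∀ t, (3*a₁) * (α t 0 * α t 0) + (2*a₄) * (α t 0 * α t 1) +
      (2*a₅) * (α t 0 * α t 2) + a₆ * (α t 1 * α t 1) + a₈ * (α t 2 * α t 2) +
      a₁₀ * (α t 1 * α t 2) = 0 := by
    intro t
    linear_combination H0 t - α t 0 * hb1 - α t 1 * hb4 - α t 2 * hb5
  have ha1 : (3*a₁ : ℝ) = 0 :=
    aux2 _ _ _ _ _ _ _ _ _ (hcc 0) (hcc 1) (hcc 2) hx0 hy0 hz0
      hdx.deriv hdy.deriv hdz.deriv H0'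
  exact ⟨hb1', hb4, hb5, by linarith⟩
end
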